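/- arXiv:1908.04468 — 4 statements merged into one kernel-verified Lean document; each statement's English description precedes it below -/
import Mathlib

section
/- Under the same descent setup (d_t distance estimates, g_t gradient estimates, step size η = 1/8000), if some iteration t satisfies ‖μ − x_t‖ ≤ 14000r, then the output x_{t*} with t* = argmin_t d_t satisfies ‖μ − x_{t*}‖ ≤ 588000 r. -/
open RealInnerProductSpace

theorem descent_output_guarantee_general
    {D T : ℕ} (μ : EuclideanSpace ℝ (Fin D))
    (x : Fin T → EuclideanSpace ℝ (Fin D)) (d : Fin T → ℝ) (r : ℝ)
    (hdist₁ : ∀ t, ‖μ - x t‖ ≤ 14000 * r → d t ≤ 28000 * r)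
    (hdist₂ : ∀ t, ‖μ - x t‖ > 14000 * r →
      (1 / 21) * ‖μ - x t‖ ≤ d t ∧ d t ≤ 2 * ‖μ - x t‖)
    (hgood : ∃ t, ‖μ - x t‖ ≤ 14000 * r)
    (tstar : Fin T) (hmin : ∀ t, d tstar ≤ d t) :
    ‖μ - x tstar‖ ≤ 588000 * r := by
  obtain ⟨t, ht⟩ := hgood
  have hd : d tstar ≤ 28000 * r := (hmin t).trans (hdist₁ t ht)
  rcases le_or_gt ‖μ - x tstar‖ (14000 * r) with hclose | hfar
  · linarith [norm_nonneg (μ - x tstar)]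
  · linarith [(hdist₂ tstar hfar).1]

/-- If each `d t` is a distance estimate with respect to `x t`, some iteration
satisfies `‖μ - x t‖ ≤ 14000 r`, and `t*` minimizes `d`, then the output
`x t*` satisfies `‖μ - x t*‖ ≤ 588000 r`. -/
theorem descent_output_guarantee
    {D T : ℕ} (μ : EuclideanSpace ℝ (Fin D))
    (x : Fin T → EuclideanSpace ℝ (Fin D)) (d : Fin T → ℝ) (r : ℝ)
    (hr : 0 < r)
    (hdist₁ : ∀ t, ‖μ - x t‖ ≤ 14000 * r → d t ≤ 28000 * r)
    (hdist₂ : ∀ t, ‖μ - x t‖ > 14000 * r →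
      (1 / 21) * ‖μ - x t‖ ≤ d t ∧ d t ≤ 2 * ‖μ - x t‖)
    (hgood : ∃ t, ‖μ - x t‖ ≤ 14000 * r)
    (tstar : Fin T) (hmin : ∀ t, d tstar ≤ d t) :
    ‖μ - x tstar‖ ≤ 588000 * r :=
  descent_output_guarantee_general μ x d r hdist₁ hdist₂ hgood tstar hmin
end

section
/- Let Z_1,…,Z_k, x, μ ∈ R^d and r > 0, and suppose the Lugosi–Mendelson condition holds: for every unit vector v, |{i : ⟨v, Z_i − μ⟩ ≥ 600r}| ≤ 0.05k. Let θ' be the optimal value of the two-sided program max θ subject to: there exist b ∈ {0,1}^k with ∑b_i ≥ 0.95k and a unit vector w with b_i|⟨Z_i − x, w⟩| ≥ b_i θ for all i. Then θ' ≤ ‖μ − x‖ + 600r. -/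
/-!
A unit vector `v` and its opposite `-v` both satisfy the Lugosi–Mendelson condition, so at most
`0.1 k` of the points have `|⟪w, Z i - μ⟫| ≥ 600 r`. The `0.95 k` points of the margin set cannot
all be among them, and for any remaining one the margin `|⟪Z i - x, w⟫|` is at most
`|⟪w, Z i - μ⟫| + |⟪w, μ - x⟫| < 600 r + ‖μ - x‖`.
-/

open RealInnerProductSpace

theorem Finset.card_filter_le_abs_le {ι : Type*} (s : Finset ι) (f : ι → ℝ) (c : ℝ) :
    (s.filter fun i => c ≤ |f i|).card ≤
      (s.filter fun i => c ≤ f i).card + (s.filter fun i => c ≤ -f i).card := by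
  classical
  refine (card_le_card fun i hi => ?_).trans (card_union_le _ _)
  simp only [mem_filter, mem_union] at hi ⊢
  rcases le_abs'.mp hi.2 with h | h
  · exact Or.inr ⟨hi.1, by linarith⟩
  · exact Or.inl ⟨hi.1, h⟩

theorem abs_inner_sub_le_of_abs_inner_sub_le {E : Type*} [NormedAddCommGroup E]
    [InnerProductSpace ℝ E] {w : E} (hw : ‖w‖ = 1) {z x μ : E} {c : ℝ}
    (hz : |⟪w, z - μ⟫| ≤ c) : |⟪z - x, w⟫| ≤ ‖μ - x‖ + c := by
  have hsplit : ⟪z - x, w⟫ = ⟪w, z - μ⟫ + ⟪w, μ - x⟫ := by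
    rw [real_inner_comm, ← inner_add_right, sub_add_sub_cancel]
  have hCS : |⟪w, μ - x⟫| ≤ ‖μ - x‖ := by
    simpa [hw] using abs_real_inner_le_norm w (μ - x)
  calc |⟪z - x, w⟫| ≤ |⟪w, z - μ⟫| + |⟪w, μ - x⟫| := hsplit ▸ abs_add_le _ _
    _ ≤ ‖μ - x‖ + c := by linarith

theorem twosided_opt_upper_bound_general
    {d k : ℕ} (hk : 0 < k)
    (Z : Fin k → EuclideanSpace ℝ (Fin d))
    (x μ : EuclideanSpace ℝ (Fin d)) (r : ℝ)
    (hLM : ∀ v : EuclideanSpace ℝ (Fin d), ‖v‖ = 1 →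
      ((Finset.univ.filter fun i => ⟪v, Z i - μ⟫ ≥ 600 * r).card : ℝ)
        ≤ 0.05 * k)
    (θ : ℝ) (b : Fin k → Bool) (w : EuclideanSpace ℝ (Fin d))
    (hw : ‖w‖ = 1)
    (hb : ((Finset.univ.filter fun i => b i = true).card : ℝ) ≥ 0.95 * k)
    (hmargin : ∀ i, b i = true → |⟪Z i - x, w⟫| ≥ θ) :
    θ ≤ ‖μ - x‖ + 600 * r := by
  set far := Finset.univ.filter fun i => 600 * r ≤ |⟪w, Z i - μ⟫|
  have hneg := hLM (-w) (by rw [norm_neg, hw])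
  simp only [inner_neg_left] at hneg
  have hfar : (far.card : ℝ) ≤ 0.1 * k := calc
    (far.card : ℝ) ≤ _ + _ := by
      exact_mod_cast Finset.card_filter_le_abs_le _ (fun i => ⟪w, Z i - μ⟫) (600 * r)
    _ ≤ 0.05 * k + 0.05 * k := add_le_add (hLM w hw) hneg
    _ = 0.1 * k := by ring
  have hk' : (0 : ℝ) < k := by exact_mod_cast hk
  have hfew : far.card < (Finset.univ.filter fun i => b i = true).card := by
    have : (far.card : ℝ) < (Finset.univ.filter fun i => b i = true).card := by linarith
    exact_mod_cast this
  obtain ⟨i, hi, hnear⟩ := Finset.exists_mem_notMem_of_card_lt_card hfew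
  simp only [far, Finset.mem_filter, Finset.mem_univ, true_and, not_le] at hi hnear
  exact (hmargin i hi).trans (abs_inner_sub_le_of_abs_inner_sub_le hw hnear.le)

/-- Under the Lugosi–Mendelson condition, every feasible value `θ` of the
two-sided inner maximization `M₂(x, Z)` satisfies `θ ≤ ‖μ - x‖ + 600 r`;
in particular the optimal value does. -/
theorem twosided_opt_upper_bound
    {d k : ℕ} (hk : 0 < k)
    (Z : Fin k → EuclideanSpace ℝ (Fin d))
    (x μ : EuclideanSpace ℝ (Fin d)) (r : ℝ) (hr : 0 < r)
    (hLM : ∀ v : EuclideanSpace ℝ (Fin d), ‖v‖ = 1 →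
      ((Finset.univ.filter fun i => ⟪v, Z i - μ⟫ ≥ 600 * r).card : ℝ)
        ≤ 0.05 * k)
    (θ : ℝ) (b : Fin k → Bool) (w : EuclideanSpace ℝ (Fin d))
    (hw : ‖w‖ = 1)
    (hb : ((Finset.univ.filter fun i => b i = true).card : ℝ) ≥ 0.95 * k)
    (hmargin : ∀ i, b i = true → |⟪Z i - x, w⟫| ≥ θ) :
    θ ≤ ‖μ - x‖ + 600 * r :=
  twosided_opt_upper_bound_general hk Z x μ r hLM θ b w hw hb hmargin
end

section
/- Let μ, x, g ∈ R^d with ‖g‖ = 1 and ‖μ − x‖ ≥ 14000r, and let d ≥ (1/20)(‖μ − x‖ − 600r). Suppose there exists an index j such that ⟨Z_j − x, g⟩ ≥ d and ⟨Z_j − μ, g⟩ ≤ 600r. Then ⟨g, (μ − x)/‖μ − x‖⟩ ≥ 1/200. -/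
/-!
Projecting onto `g`, `⟪g, μ - x⟫ = ⟪Z - x, g⟫ - ⟪Z - μ, g⟫ ≥ d - 600 r ≥ ‖μ - x‖ / 20 - 630 r`,
and `‖μ - x‖ ≥ 14000 r` is exactly what makes this at least `‖μ - x‖ / 200`.
-/

open RealInnerProductSpace

section

variable {E : Type*} [NormedAddCommGroup E] [InnerProductSpace ℝ E]

theorem inner_sub_eq_inner_sub_left_sub_inner_sub_left (g μ x Z : E) :
    ⟪g, μ - x⟫ = ⟪Z - x, g⟫ - ⟪Z - μ, g⟫ := by
  rw [real_inner_comm, ← inner_sub_left, sub_sub_sub_cancel_left]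

theorem le_inner_inv_norm_smul_of_norm_mul_le {g v : E} {c : ℝ} (hv : 0 < ‖v‖)
    (h : ‖v‖ * c ≤ ⟪g, v⟫) : c ≤ ⟪g, ‖v‖⁻¹ • v⟫ := by
  rwa [real_inner_smul_right, le_inv_mul_iff₀ hv]

end

theorem gradient_estimate_core_general
    {D : ℕ} (μ x g Z : EuclideanSpace ℝ (Fin D)) (d r : ℝ)
    (hr : 0 < r)
    (hfar : ‖μ - x‖ ≥ 14000 * r)
    (hd : d ≥ (1 / 20) * (‖μ - x‖ - 600 * r))
    (hZ₁ : ⟪Z - x, g⟫ ≥ d)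
    (hZ₂ : ⟪Z - μ, g⟫ ≤ 600 * r) :
    ⟪g, (‖μ - x‖)⁻¹ • (μ - x)⟫ ≥ 1 / 200 := by
  have hpos : 0 < ‖μ - x‖ := lt_of_lt_of_le (by positivity) hfar
  have hproj : d - 600 * r ≤ ⟪g, μ - x⟫ := by
    rw [inner_sub_eq_inner_sub_left_sub_inner_sub_left g μ x Z]
    linarith
  exact le_inner_inv_norm_smul_of_norm_mul_le hpos (by linarith)

/-- Core inequality of the gradient-estimate lemma: a point `Z` with large
margin in direction `g` relative to `x` that is close to `μ` in direction `g`
forces `g` to correlate with the true gradient direction. -/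
theorem gradient_estimate_core
    {D : ℕ} (μ x g Z : EuclideanSpace ℝ (Fin D)) (d r : ℝ)
    (hr : 0 < r)
    (hg : ‖g‖ = 1)
    (hfar : ‖μ - x‖ ≥ 14000 * r)
    (hd : d ≥ (1 / 20) * (‖μ - x‖ - 600 * r))
    (hZ₁ : ⟪Z - x, g⟫ ≥ d)
    (hZ₂ : ⟪Z - μ, g⟫ ≤ 600 * r) :
    ⟪g, (‖μ - x‖)⁻¹ • (μ - x)⟫ ≥ 1 / 200 :=
  gradient_estimate_core_general μ x g Z d r hr hfar hd hZ₁ hZ₂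
end

section
/- (MWU regret consequence for the FHP algorithm) Suppose unit vectors w_1,…,w_T and smooth distributions τ_1,…,τ_T on [k] satisfy ∑_{t=1}^T ⟨τ_t, σ_t²⟩ ≤ (3/2)∑_{t=1}^T ⟨p, σ_t²⟩ + 2·KL(p‖τ_1) for every smooth p, where σ_t(i) = |⟨Z_i, w_t⟩| ∈ [0,1] and τ_1 is uniform. If additionally ∑_{t=1}^T ⟨τ_t, σ_t²⟩ ≥ (2T/25)θ² and T ≥ 10^5 · (log k)/θ², then for all but a 1/4 fraction of indices i ∈ [k]: ∑_{t=1}^T ⟨Z_i, w_t⟩² ≥ 100 log k. -/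
/-!
Suppose more than `k/4` indices `i` are bad, i.e. `αᵢ = ∑ₜ ⟨Zᵢ, wₜ⟩² < 100 log k`. The uniform
distribution `p` on the bad indices is then smooth (`p i ≤ 4/k`), `⟨p, α⟩ < 100 log k`, and
`KL(p ‖ uniform) ≤ log k`, so the regret bound caps the energy by `150 log k + 2 log k`. But the
energy is at least `(2T/25) θ² ≥ 8000 log k`, and `log k > 0` because some `αᵢ ≥ 0` is below
`100 log k`.
-/

open RealInnerProductSpace Finset

section UniformWeights

variable {ι : Type*}

noncomputable def uniformWeights (s : Finset ι) : ι → ℝ :=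
  (s : Set ι).indicator fun _ => (#s : ℝ)⁻¹

theorem uniformWeights_nonneg (s : Finset ι) (i : ι) : 0 ≤ uniformWeights s i :=
  Set.indicator_nonneg (fun _ _ => by positivity) i

theorem uniformWeights_le_div {s : Finset ι} {n c : ℝ} (hn : 0 < n) (hs : n ≤ c * #s) (i : ι) :
    uniformWeights s i ≤ c / n := by
  have hsc : 0 < c * #s := hn.trans_le hs
  have hc : 0 < c := pos_of_mul_pos_left hsc (Nat.cast_nonneg _)
  have hcard : (0 : ℝ) < #s := pos_of_mul_pos_right hsc hc.le
  by_cases hi : i ∈ s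
  · rw [uniformWeights, Set.indicator_of_mem (by exact_mod_cast hi),
      inv_le_iff_one_le_mul₀ hcard, div_mul_eq_mul_div, one_le_div hn]
    exact hs
  · rw [uniformWeights, Set.indicator_of_notMem (by exact_mod_cast hi)]
    positivity

variable [Fintype ι]

theorem sum_uniformWeights_mul (s : Finset ι) (f : ι → ℝ) :
    ∑ i, uniformWeights s i * f i = (∑ i ∈ s, f i) / #s := by
  simp only [uniformWeights, ← Set.indicator_mul_left,
    sum_indicator_subset _ (subset_univ s), inv_mul_eq_div, sum_div]

theorem sum_uniformWeights {s : Finset ι} (hs : s.Nonempty) : ∑ i, uniformWeights s i = 1 := by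
  simpa [hs.ne_empty] using sum_uniformWeights_mul s 1

theorem sum_uniformWeights_mul_le {s : Finset ι} (hs : s.Nonempty) {f : ι → ℝ} {M : ℝ}
    (hf : ∀ i ∈ s, f i ≤ M) : ∑ i, uniformWeights s i * f i ≤ M := by
  rw [sum_uniformWeights_mul, div_le_iff₀ (by exact_mod_cast hs.card_pos), mul_comm]
  simpa using sum_le_card_nsmul s f M hf

end UniformWeights

theorem sum_mul_log_mul_le_log {ι : Type*} [Fintype ι] {p : ι → ℝ} (hp0 : ∀ i, 0 ≤ p i)
    (hp1 : ∑ i, p i = 1) {n : ℝ} (hn : 0 < n) :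
    ∑ i, p i * Real.log (p i * n) ≤ Real.log n := by
  calc ∑ i, p i * Real.log (p i * n) ≤ ∑ i, p i * Real.log n := by
        refine sum_le_sum fun i _ => ?_
        rcases (hp0 i).eq_or_lt with hpi | hpi
        · simp [← hpi]
        have hp_le : p i ≤ 1 := hp1 ▸ single_le_sum (fun j _ => hp0 j) (mem_univ i)
        gcongr
        nlinarith
    _ = Real.log n := by rw [← sum_mul, hp1, one_mul]

theorem mwu_regret_consequence_general
    {d k T : ℕ}
    (Z : Fin k → EuclideanSpace ℝ (Fin d))
    (w : Fin T → EuclideanSpace ℝ (Fin d))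
    (τ : Fin T → Fin k → ℝ)
    (θ : ℝ) (hθ : 0 < θ)
    (hregret : ∀ p : Fin k → ℝ, (∀ i, 0 ≤ p i) → (∑ i, p i = 1) →
      (∀ i, p i ≤ 4 / k) →
      ∑ t, ∑ i, τ t i * ⟪Z i, w t⟫ ^ 2
        ≤ (3 / 2) * ∑ t, ∑ i, p i * ⟪Z i, w t⟫ ^ 2
          + 2 * ∑ i, p i * Real.log (p i * k))
    (henergy : ∑ t, ∑ i, τ t i * ⟪Z i, w t⟫ ^ 2 ≥ (2 * T / 25) * θ ^ 2)
    (hT : (T : ℝ) ≥ 10 ^ 5 * Real.log k / θ ^ 2) :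
    ((Finset.univ.filter fun i =>
        ¬ (∑ t, ⟪Z i, w t⟫ ^ 2 ≥ 100 * Real.log k)).card : ℝ)
      ≤ k / 4 := by
  set B := univ.filter fun i => ¬ (∑ t, ⟪Z i, w t⟫ ^ 2 ≥ 100 * Real.log k)
  by_contra! hB
  obtain ⟨i₀, hi₀⟩ : B.Nonempty :=
    card_pos.mp (by exact_mod_cast (by positivity : (0 : ℝ) ≤ k / 4).trans_lt hB)
  have hbad : ∀ i ∈ B, ∑ t, ⟪Z i, w t⟫ ^ 2 < 100 * Real.log k :=
    fun i hi => not_le.mp (mem_filter.mp hi).2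
  have hk : (0 : ℝ) < k := by exact_mod_cast i₀.pos
  have hlog : 0 < Real.log k := by
    linarith [hbad i₀ hi₀, sum_nonneg fun t (_ : t ∈ univ) => sq_nonneg ⟪Z i₀, w t⟫]
  set p := uniformWeights B
  have hp1 : ∑ i, p i = 1 := sum_uniformWeights ⟨i₀, hi₀⟩
  have hregret_p :=
    hregret p (uniformWeights_nonneg B) hp1 (uniformWeights_le_div hk (by linarith))
  have hswap : ∑ t, ∑ i, p i * ⟪Z i, w t⟫ ^ 2 = ∑ i, p i * ∑ t, ⟪Z i, w t⟫ ^ 2 := by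
    simp only [mul_sum]; exact sum_comm
  have havg := sum_uniformWeights_mul_le ⟨i₀, hi₀⟩ fun i hi => (hbad i hi).le
  have hKL := sum_mul_log_mul_le_log (uniformWeights_nonneg B) hp1 hk
  have hTθ : 10 ^ 5 * Real.log k ≤ T * θ ^ 2 := (div_le_iff₀ (by positivity)).mp hT
  linarith

/-- MWU regret consequence for the FHP algorithm: given the regret bound with
Bregman projections onto smooth distributions, the lower bound on the total
weighted energy, and `T ≥ 10⁵ log k / θ²`, all but a `1/4` fraction of the
indices `i` satisfy `∑_t ⟨Z_i, w_t⟩² ≥ 100 log k`. -/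
theorem mwu_regret_consequence
    {d k T : ℕ} (hk : 0 < k)
    (Z : Fin k → EuclideanSpace ℝ (Fin d))
    (w : Fin T → EuclideanSpace ℝ (Fin d)) (hw : ∀ t, ‖w t‖ = 1)
    (τ : Fin T → Fin k → ℝ)
    (hτ0 : ∀ t i, 0 ≤ τ t i) (hτ1 : ∀ t, ∑ i, τ t i = 1)
    (hτsmooth : ∀ t i, τ t i ≤ 4 / k)
    (hσ : ∀ t i, |⟪Z i, w t⟫| ≤ 1)
    (θ : ℝ) (hθ : 0 < θ)
    (hregret : ∀ p : Fin k → ℝ, (∀ i, 0 ≤ p i) → (∑ i, p i = 1) →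
      (∀ i, p i ≤ 4 / k) →
      ∑ t, ∑ i, τ t i * ⟪Z i, w t⟫ ^ 2
        ≤ (3 / 2) * ∑ t, ∑ i, p i * ⟪Z i, w t⟫ ^ 2
          + 2 * ∑ i, p i * Real.log (p i * k))
    (henergy : ∑ t, ∑ i, τ t i * ⟪Z i, w t⟫ ^ 2 ≥ (2 * T / 25) * θ ^ 2)
    (hT : (T : ℝ) ≥ 10 ^ 5 * Real.log k / θ ^ 2) :
    ((Finset.univ.filter fun i =>
        ¬ (∑ t, ⟪Z i, w t⟫ ^ 2 ≥ 100 * Real.log k)).card : ℝ)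
      ≤ k / 4 :=
  mwu_regret_consequence_general Z w τ θ hθ hregret henergy hT
end
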